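/- Let J ⊂ I be monomial ideals of S = K[x_1,…,x_n]. Then fdepth I/J ≥ min{ρ(c) : c ∈ P_{I/J}}, where P_{I/J} is the characteristic poset taken with respect to g equal to the join of all exponent vectors of the minimal generators of I and J. In particular, if I is a squarefree monomial ideal, then fdepth I ≥ min{deg u : u ∈ G(I)}. -/

import Mathlib

open MvPolynomial

namespace StanleyPaper

variable {n : ℕ} {K : Type} [Field K]

/-- A monomial ideal: an ideal generated by monomials. -/
def IsMonomialIdeal (I : Ideal (MvPolynomial (Fin n) K)) : Prop :=
  ∃ A : Set (Fin n →₀ ℕ),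
    I = Ideal.span ((fun a => (monomial a (1 : K) : MvPolynomial (Fin n) K)) '' A)

/-- The set of exponent vectors `a` with `x^a ∈ I \ J`. -/
def expSet (I J : Ideal (MvPolynomial (Fin n) K)) : Set (Fin n →₀ ℕ) :=
  {a | (monomial a (1 : K) : MvPolynomial (Fin n) K) ∈ I ∧
    (monomial a (1 : K) : MvPolynomial (Fin n) K) ∉ J}

/-- The characteristic poset `P^g_{I/J}` of `I/J` with respect to `g`. -/
def charPoset (I J : Ideal (MvPolynomial (Fin n) K)) (g : Fin n →₀ ℕ) : Set (Fin n →₀ ℕ) :=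
  {a | a ∈ expSet I J ∧ a ≤ g}

/-- `Z_b = { x_j : b(j) = g(j) }`. -/
def Zset (g b : Fin n →₀ ℕ) : Finset (Fin n) :=
  Finset.univ.filter fun j => b j = g j

/-- `ρ(b) = |Z_b|`. -/
def rho (g b : Fin n →₀ ℕ) : ℕ := (Zset g b).card

/-- The Stanley space `x^c K[Z]`, as a `K`-subspace of `S = K[x_1,…,x_n]`. -/
noncomputable def stanleySpace (K : Type) [Field K] (c : Fin n →₀ ℕ) (Z : Finset (Fin n)) :
    Submodule K (MvPolynomial (Fin n) K) :=
  Submodule.span K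
    ((fun a => (monomial a (1 : K) : MvPolynomial (Fin n) K)) ''
      {a | c ≤ a ∧ ∀ j ∉ Z, a j = c j})

/-- The `K`-span of the monomials of `I \ J`; this is the standard model for the
`ℤⁿ`-graded `K`-vector space `I/J`. -/
noncomputable def quotSpace (I J : Ideal (MvPolynomial (Fin n) K)) : Submodule K (MvPolynomial (Fin n) K) :=
  Submodule.span K ((fun a => (monomial a (1 : K) : MvPolynomial (Fin n) K)) '' expSet I J)

/-- The `K`-span of the monomials of `J`. -/
noncomputable def Jspan (J : Ideal (MvPolynomial (Fin n) K)) : Submodule K (MvPolynomial (Fin n) K) :=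
  Submodule.span K ((fun a => (monomial a (1 : K) : MvPolynomial (Fin n) K)) ''
    {a | (monomial a (1 : K) : MvPolynomial (Fin n) K) ∈ J})

/-- A (graded) `K`-subspace `W` of the model of `I/J` corresponds to an (`ℤⁿ`-graded)
`S`-submodule of `I/J` iff it is stable under multiplication by the variables, modulo `J`. -/
def IsSSubmoduleModJ (J : Ideal (MvPolynomial (Fin n) K))
    (W : Submodule K (MvPolynomial (Fin n) K)) : Prop :=
  ∀ j : Fin n, ∀ p ∈ W, (X j : MvPolynomial (Fin n) K) * p ∈ W ⊔ Jspan J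

/-- A partition of a (finite) subposet `P` of `ℕⁿ` into intervals `[c i, d i]`. -/
structure IntervalPartition (P : Set (Fin n →₀ ℕ)) where
  r : ℕ
  c : Fin r → (Fin n →₀ ℕ)
  d : Fin r → (Fin n →₀ ℕ)
  le : ∀ i, c i ≤ d i
  mem_c : ∀ i, c i ∈ P
  mem_d : ∀ i, d i ∈ P
  sub : ∀ i, Set.Icc (c i) (d i) ⊆ P
  cover : ∀ a ∈ P, ∃ i, a ∈ Set.Icc (c i) (d i)
  disj : ∀ i j, i ≠ j → Disjoint (Set.Icc (c i) (d i)) (Set.Icc (c j) (d j))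

/-- The inner index set of the `i`-th interval: all `c' ∈ [c i, d i]` with
`c'(j) = c i (j)` for all `j` with `x_j ∈ Z_{d i}`. -/
def IntervalPartition.innerSet {P : Set (Fin n →₀ ℕ)} (Pt : IntervalPartition P)
    (g : Fin n →₀ ℕ) (i : Fin Pt.r) : Set (Fin n →₀ ℕ) :=
  {c' | c' ∈ Set.Icc (Pt.c i) (Pt.d i) ∧ ∀ j ∈ Zset g (Pt.d i), c' j = Pt.c i j}

/-- The index set of the Stanley decomposition `D(Pt)` associated to a partition `Pt`. -/
def IntervalPartition.DPIdx {P : Set (Fin n →₀ ℕ)} (Pt : IntervalPartition P)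
    (g : Fin n →₀ ℕ) : Type :=
  Σ i : Fin Pt.r, Pt.innerSet g i

/-- The family of Stanley spaces of the decomposition `D(Pt)`:
the summand at `(i, c')` is `x^{c'} K[Z_{d i}]`. -/
noncomputable def IntervalPartition.DPfam (K : Type) [Field K] {P : Set (Fin n →₀ ℕ)}
    (Pt : IntervalPartition P) (g : Fin n →₀ ℕ) (x : Pt.DPIdx g) :
    Submodule K (MvPolynomial (Fin n) K) :=
  stanleySpace K (x.2 : Fin n →₀ ℕ) (Zset g (Pt.d x.1))

/-- `sdepth D(Pt) = min { ρ(d i) }`. -/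
noncomputable def IntervalPartition.sdepthDP {P : Set (Fin n →₀ ℕ)} (Pt : IntervalPartition P)
    (g : Fin n →₀ ℕ) : ℕ :=
  sInf {k | ∃ i : Fin Pt.r, k = rho g (Pt.d i)}

/-- The property that the partial unions `⋃_{i < t} [c i, d i]` are poset ideals
of the characteristic poset, for all `t`. -/
def IntervalPartition.InitialsArePosetIdeals {P : Set (Fin n →₀ ℕ)}
    (Pt : IntervalPartition P) : Prop :=
  ∀ t : ℕ, ∀ a b : Fin n →₀ ℕ,
    (∃ i : Fin Pt.r, (i : ℕ) < t ∧ a ∈ Set.Icc (Pt.c i) (Pt.d i)) → b ∈ P → b ≤ a →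
      ∃ i : Fin Pt.r, (i : ℕ) < t ∧ b ∈ Set.Icc (Pt.c i) (Pt.d i)

/-- The family `(x^{u i} K[Z i])_{i : ι}` is a Stanley decomposition of `I/J`:
each Stanley space is a free `K[Z i]`-module (its natural monomial basis is
`K`-linearly independent), the spaces are independent, and they sum to `I/J`. -/
def IsStanleyDecompOf (I J : Ideal (MvPolynomial (Fin n) K)) {ι : Type}
    (u : ι → (Fin n →₀ ℕ)) (Z : ι → Finset (Fin n)) : Prop :=
  (∀ i, LinearIndependent K fun e : {e : Fin n →₀ ℕ // ∀ j ∉ Z i, e j = 0} =>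
    (monomial (u i + (e : Fin n →₀ ℕ)) (1 : K) : MvPolynomial (Fin n) K)) ∧
  iSupIndep (fun i => stanleySpace K (u i) (Z i)) ∧
  (⨆ i, stanleySpace K (u i) (Z i)) = quotSpace I J

/-- A (finite) Stanley decomposition of `I/J`. -/
structure StanleyDec (I J : Ideal (MvPolynomial (Fin n) K)) where
  m : ℕ
  u : Fin m → (Fin n →₀ ℕ)
  Z : Fin m → Finset (Fin n)
  isDecomp : IsStanleyDecompOf I J u Z

/-- The Stanley depth of a Stanley decomposition: `min |Z i|`. -/
noncomputable def StanleyDec.sdepth {I J : Ideal (MvPolynomial (Fin n) K)} (D : StanleyDec I J) : ℕ :=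
  sInf {k | ∃ i, k = (D.Z i).card}

/-- The Stanley depth of `I/J`. -/
noncomputable def sdepthQ (I J : Ideal (MvPolynomial (Fin n) K)) : ℕ :=
  sSup {k | ∃ D : StanleyDec I J, k = D.sdepth}

/-- A Stanley decomposition of `I/J` is induced by a prime filtration iff its Stanley
spaces can be ordered so that all partial sums are (`ℤⁿ`-graded) `S`-submodules of `I/J`. -/
def StanleyDec.InducedByPrimeFiltration {I J : Ideal (MvPolynomial (Fin n) K)}
    (D : StanleyDec I J) : Prop :=
  ∃ σ : Equiv.Perm (Fin D.m), ∀ t : ℕ,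
    IsSSubmoduleModJ J
      (⨆ i : Fin D.m, ⨆ _ : (σ i : ℕ) < t, stanleySpace K (D.u i) (D.Z i))

/-- `D(Pt)` is induced by a prime filtration: its Stanley spaces can be ordered so that
all partial sums are (`ℤⁿ`-graded) `S`-submodules of `I/J`. -/
def IntervalPartition.DPInducedByPrimeFiltration (J : Ideal (MvPolynomial (Fin n) K))
    {P : Set (Fin n →₀ ℕ)} (Pt : IntervalPartition P) (g : Fin n →₀ ℕ) : Prop :=
  ∃ (N : ℕ) (e : Fin N → Pt.DPIdx g), Function.Bijective e ∧ ∀ t : ℕ,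
    IsSSubmoduleModJ J (⨆ s : Fin N, ⨆ _ : (s : ℕ) < t, Pt.DPfam K g (e s))

/-- A monomial prime ideal: an ideal generated by a subset of the variables. -/
def IsMonomialPrime (P : Ideal (MvPolynomial (Fin n) K)) : Prop :=
  ∃ V : Finset (Fin n), P = Ideal.span ((fun j => (X j : MvPolynomial (Fin n) K)) '' ↑V)

/-- A prime filtration of `I/J` (in the monomial model): a chain
`0 = W 0 ⊂ W 1 ⊂ ⋯ ⊂ W m = I/J` of `ℤⁿ`-graded `S`-submodules of `I/J` such that
`W (i+1) / W i ≅ (S/P i)(-a i)` with `P i` a monomial prime ideal. -/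
structure QPrimeFiltration (I J : Ideal (MvPolynomial (Fin n) K)) where
  m : ℕ
  W : Fin (m + 1) → Submodule K (MvPolynomial (Fin n) K)
  a : Fin m → (Fin n →₀ ℕ)
  P : Fin m → Ideal (MvPolynomial (Fin n) K)
  bot : W 0 = ⊥
  top : W (Fin.last m) = quotSpace I J
  graded : ∀ i, ∃ E : Set (Fin n →₀ ℕ),
    W i = Submodule.span K ((fun a => (monomial a (1 : K) : MvPolynomial (Fin n) K)) '' E)
  stable : ∀ i, IsSSubmoduleModJ J (W i)
  amem : ∀ i, a i ∈ expSet I J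
  gen : ∀ i, W i.succ = W i.castSucc ⊔
    Submodule.span K ((fun e => (monomial e (1 : K) : MvPolynomial (Fin n) K)) ''
      {e | a i ≤ e ∧ (monomial e (1 : K) : MvPolynomial (Fin n) K) ∉ J})
  ann : ∀ i, ∀ s : MvPolynomial (Fin n) K,
    s * monomial (a i) (1 : K) ∈ W i.castSucc ⊔ Jspan J ↔ s ∈ P i
  isPrime : ∀ i, IsMonomialPrime (P i)

/-- `fdepth ℱ = min { dim S/P : P ∈ supp ℱ }`. -/
noncomputable def QPrimeFiltration.fdepth {I J : Ideal (MvPolynomial (Fin n) K)}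
    (F : QPrimeFiltration I J) : WithBot ℕ∞ :=
  ⨅ i : Fin F.m, ringKrullDim (MvPolynomial (Fin n) K ⧸ F.P i)

/-- `fdepth I/J = max { fdepth ℱ : ℱ a prime filtration of I/J }`. -/
noncomputable def fdepthQ (I J : Ideal (MvPolynomial (Fin n) K)) : WithBot ℕ∞ :=
  ⨆ F : QPrimeFiltration I J, F.fdepth

/-- The graded maximal ideal `(x_1, …, x_n)`. -/
noncomputable def maxIdeal (n : ℕ) (K : Type) [Field K] : Ideal (MvPolynomial (Fin n) K) :=
  Ideal.span (Set.range (X : Fin n → MvPolynomial (Fin n) K))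

/-- The depth of a module over `S = K[x_1,…,x_n]` with respect to the graded maximal
ideal: the maximal length of an `M`-regular sequence of elements of `(x_1,…,x_n)`. -/
noncomputable def moduleDepth (n : ℕ) (K : Type) [Field K] (M : Type)
    [AddCommGroup M] [Module (MvPolynomial (Fin n) K) M] : ℕ :=
  sSup {r | ∃ rs : List (MvPolynomial (Fin n) K), rs.length = r ∧
    (∀ s ∈ rs, s ∈ maxIdeal n K) ∧ RingTheory.Sequence.IsRegular M rs}

/-- The `S`-module `I/J`. -/
abbrev QuotMod (I J : Ideal (MvPolynomial (Fin n) K)) :=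
  ↥I ⧸ (Submodule.comap I.subtype J)


/-- The exponent vectors of the minimal monomial generators `G(I)` of a monomial
ideal `I`. -/
def minGens {n : ℕ} {K : Type} [Field K] (I : Ideal (MvPolynomial (Fin n) K)) :
    Set (Fin n →₀ ℕ) :=
  {a | (monomial a (1 : K) : MvPolynomial (Fin n) K) ∈ I ∧
    ∀ b < a, (monomial b (1 : K) : MvPolynomial (Fin n) K) ∉ I}

/-!
Enumerate the characteristic poset `P = P^g_{I/J}` as `c₀, c₁, …` so that every element comes
before all elements below it. Since `g` bounds the minimal generators of `I` and `J`, truncation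
`e ↦ e ⊓ g` maps the exponents of `I \ J` onto `P`, and the monomials whose truncation is among
`c₀, …, c_{t-1}` span an `S`-submodule of `I/J`: together with the exponents of `J` they form an
upper set. Passing from step `t` to `t + 1` adds `x^{c_t} S`, and `x^{c_t + b}` is new exactly
when `b` is supported on `Z_{c_t}`; so the factor is `(S/P_t)(-c_t)` with `P_t` generated by the
variables outside `Z_{c_t}`, and `dim S/P_t = ρ(c_t)`. For squarefree `I` take `J = 0` and
`g = (1, …, 1)`: then `ρ(c) = deg c ≥ deg u` for any minimal generator `u ≤ c`.
-/

section Monomial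

variable {σ R : Type*} [CommSemiring R]

theorem monomial_one_mem_of_le {I : Ideal (MvPolynomial σ R)} {a e : σ →₀ ℕ}
    (ha : monomial a (1 : R) ∈ I) (hle : a ≤ e) : monomial e (1 : R) ∈ I :=
  I.mem_of_dvd (monomial_dvd_monomial.2 ⟨Or.inr hle, one_dvd _⟩) ha

theorem mul_monomial_one_mem_restrictSupport_iff {p : MvPolynomial σ R} {a : σ →₀ ℕ}
    {E : Set (σ →₀ ℕ)} :
    p * monomial a 1 ∈ restrictSupport R E ↔ ∀ b ∈ p.support, a + b ∈ E := by
  simp only [mem_restrictSupport_iff, Set.subset_def, Finset.mem_coe, mem_support_iff,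
    coeff_mul_monomial', mul_one]
  constructor
  · intro h b hb
    exact h _ (by rwa [if_pos le_self_add, add_tsub_cancel_left])
  · intro h e he
    split_ifs at he with hae
    · simpa [add_tsub_cancel_of_le hae] using h _ he
    · exact absurd rfl he

theorem monomial_one_notMem_bot [Nontrivial R] (a : σ →₀ ℕ) :
    monomial a (1 : R) ∉ (⊥ : Ideal (MvPolynomial σ R)) := by
  simp

theorem restrictSupport_union (E F : Set (σ →₀ ℕ)) :
    restrictSupport R (E ∪ F) = restrictSupport R E ⊔ restrictSupport R F := by
  simp only [restrictSupport_eq_span, Set.image_union, Submodule.span_union]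

end Monomial

theorem card_le_ringKrullDim_quotient_span_X {σ K : Type*} [Field K] (V : Set σ) (Z : Finset σ)
    (hZV : Disjoint (Z : Set σ) V) :
    (Z.card : WithBot ℕ∞) ≤
      ringKrullDim (MvPolynomial σ K ⧸ Ideal.span (X '' V : Set (MvPolynomial σ K))) := by
  let f : MvPolynomial σ K →ₐ[K] MvPolynomial Z K := killCompl Subtype.val_injective
  have hf : Function.Surjective f := fun p =>
    ⟨rename Subtype.val p, killCompl_rename_app Subtype.val_injective p⟩
  have hV : Ideal.span (X '' V) ≤ RingHom.ker f := by
    rw [Ideal.span_le]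
    rintro _ ⟨j, hj, rfl⟩
    have hjZ : j ∉ Z := fun hjZ => hZV.ne_of_mem hjZ hj rfl
    simp [f, killCompl, hjZ]
  calc (Z.card : WithBot ℕ∞) = ringKrullDim K + Nat.card Z := by
        rw [ringKrullDim_eq_zero_of_field, zero_add, Nat.card_eq_fintype_card, Fintype.card_coe]
    _ ≤ ringKrullDim (MvPolynomial Z K) := ringKrullDim_add_natCard_le_ringKrullDim_mvPolynomial _
    _ ≤ _ := ringKrullDim_le_of_surjective (Ideal.Quotient.lift _ f.toRingHom hV)
        (Ideal.Quotient.lift_surjective_of_surjective _ _ hf)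

theorem exists_enum_lt_imp_gt {α : Type*} [PartialOrder α] {P : Set α} (hP : P.Finite) :
    ∃ (m : ℕ) (c : Fin m → α), Function.Injective c ∧ Set.range c = P ∧
      ∀ i j, c i < c j → j < i := by
  classical
  let e : LinearExtension α ≃ α := Equiv.refl _
  let s : Finset (LinearExtension α) := hP.toFinset.map e.symm.toEmbedding
  let f := s.orderEmbOfFin rfl
  have hstrict : StrictMono (toLinearExtension : α →o LinearExtension α) :=
    toLinearExtension.monotone.strictMono_of_injective fun _ _ h => h
  refine ⟨s.card, e ∘ f ∘ Fin.rev, e.injective.comp (f.injective.comp Fin.rev_injective),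
    ?_, fun i j hij => ?_⟩
  · rw [Set.range_comp, Fin.rev_surjective.range_comp, Finset.range_orderEmbOfFin]
    simp [s]
  · simpa using f.lt_iff_lt.1 (hstrict hij)

theorem exists_mem_minGens_le {I : Ideal (MvPolynomial (Fin n) K)} {e : Fin n →₀ ℕ}
    (he : monomial e (1 : K) ∈ I) : ∃ a ∈ minGens (K := K) I, a ≤ e := by
  obtain ⟨a, ⟨haI, hae⟩, hmin⟩ := wellFounded_lt.has_min
    {b | monomial b (1 : K) ∈ I ∧ b ≤ e} ⟨e, he, le_rfl⟩
  exact ⟨a, ⟨haI, fun b hba hbI => hmin b ⟨hbI, hba.le.trans hae⟩ hba⟩, hae⟩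

theorem monomial_inf_mem_iff {I : Ideal (MvPolynomial (Fin n) K)} {g : Fin n →₀ ℕ}
    (hg : ∀ a ∈ minGens (K := K) I, a ≤ g) (e : Fin n →₀ ℕ) :
    monomial (e ⊓ g) (1 : K) ∈ I ↔ monomial e (1 : K) ∈ I := by
  refine ⟨fun h => monomial_one_mem_of_le h inf_le_left, fun he => ?_⟩
  obtain ⟨a, ha, hae⟩ := exists_mem_minGens_le he
  exact monomial_one_mem_of_le ha.1 (le_inf hae (hg a ha))

theorem inf_mem_charPoset_iff {I J : Ideal (MvPolynomial (Fin n) K)} {g : Fin n →₀ ℕ}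
    (hgI : ∀ a ∈ minGens (K := K) I, a ≤ g) (hgJ : ∀ a ∈ minGens (K := K) J, a ≤ g)
    (e : Fin n →₀ ℕ) : e ⊓ g ∈ charPoset I J g ↔ e ∈ expSet I J := by
  simp only [charPoset, expSet, Set.mem_ofPred_eq, monomial_inf_mem_iff hgI,
    monomial_inf_mem_iff hgJ, inf_le_right, and_true]

theorem charPoset_finite (I J : Ideal (MvPolynomial (Fin n) K)) (g : Fin n →₀ ℕ) :
    (charPoset I J g).Finite :=
  (Set.finite_Iic g).subset fun _ hc => hc.2

theorem add_inf_eq_self_iff {ι : Type*} {c b g : ι →₀ ℕ} (hc : c ≤ g) :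
    (c + b) ⊓ g = c ↔ ∀ j, c j ≠ g j → b j = 0 := by
  simp only [Finsupp.ext_iff, Finsupp.inf_apply, Finsupp.add_apply]
  refine forall_congr' fun j => ?_
  have := hc j
  omega

def idealExps (J : Ideal (MvPolynomial (Fin n) K)) : Set (Fin n →₀ ℕ) :=
  {a | monomial a (1 : K) ∈ J}

theorem isUpperSet_idealExps (J : Ideal (MvPolynomial (Fin n) K)) : IsUpperSet (idealExps J) :=
  fun _ _ hle ha => monomial_one_mem_of_le ha hle

theorem Jspan_eq_restrictSupport (J : Ideal (MvPolynomial (Fin n) K)) :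
    Jspan J = restrictSupport K (idealExps J) :=
  (restrictSupport_eq_span K _).symm

structure CharPosetEnum (I J : Ideal (MvPolynomial (Fin n) K)) (g : Fin n →₀ ℕ) where
  m : ℕ
  c : Fin m → (Fin n →₀ ℕ)
  injective : Function.Injective c
  range_eq : Set.range c = charPoset I J g
  lt_imp : ∀ i j, c i < c j → j < i

namespace CharPosetEnum

theorem nonempty (I J : Ideal (MvPolynomial (Fin n) K)) (g : Fin n →₀ ℕ) :
    Nonempty (CharPosetEnum I J g) :=
  let ⟨m, c, hinj, hrange, hlt⟩ := exists_enum_lt_imp_gt (charPoset_finite I J g)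
  ⟨⟨m, c, hinj, hrange, hlt⟩⟩

variable {I J : Ideal (MvPolynomial (Fin n) K)} {g : Fin n →₀ ℕ} (E : CharPosetEnum I J g)

theorem c_mem (i : Fin E.m) : E.c i ∈ charPoset I J g := E.range_eq ▸ ⟨i, rfl⟩

def stageExps (t : ℕ) : Set (Fin n →₀ ℕ) :=
  {e | ∃ i : Fin E.m, (i : ℕ) < t ∧ e ⊓ g = E.c i}

theorem stageExps_zero : E.stageExps 0 = ∅ := by
  simp [stageExps]

theorem stageExps_m (hgI : ∀ a ∈ minGens (K := K) I, a ≤ g)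
    (hgJ : ∀ a ∈ minGens (K := K) J, a ≤ g) : E.stageExps E.m = expSet I J := by
  ext e
  rw [← inf_mem_charPoset_iff hgI hgJ, ← E.range_eq]
  exact ⟨fun ⟨i, _, hi⟩ => ⟨i, hi.symm⟩, fun ⟨i, hi⟩ => ⟨i, i.isLt, hi.symm⟩⟩

theorem mem_expSet_of_le {i : Fin E.m} {e : Fin n →₀ ℕ} (hle : E.c i ≤ e)
    (he : monomial e (1 : K) ∉ J) : e ∈ expSet I J :=
  ⟨monomial_one_mem_of_le (E.c_mem i).1.1 hle, he⟩

theorem mem_stageExps_of_lt (hgI : ∀ a ∈ minGens (K := K) I, a ≤ g)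
    (hgJ : ∀ a ∈ minGens (K := K) J, a ≤ g) {e : Fin n →₀ ℕ} (he : e ∈ expSet I J)
    {i : Fin E.m} (hlt : E.c i < e ⊓ g) : e ∈ E.stageExps i := by
  obtain ⟨k, hk⟩ : e ⊓ g ∈ Set.range E.c := E.range_eq ▸ (inf_mem_charPoset_iff hgI hgJ e).2 he
  exact ⟨k, E.lt_imp i k (hk ▸ hlt), hk.symm⟩

theorem mem_stageExps_of_le (hgI : ∀ a ∈ minGens (K := K) I, a ≤ g)
    (hgJ : ∀ a ∈ minGens (K := K) J, a ≤ g) {e : Fin n →₀ ℕ} (he : e ∈ expSet I J)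
    {i : Fin E.m} {t : ℕ} (hit : (i : ℕ) < t) (hle : E.c i ≤ e ⊓ g) : e ∈ E.stageExps t := by
  rcases hle.eq_or_lt with heq | hlt
  · exact ⟨i, hit, heq.symm⟩
  · obtain ⟨k, hk, hke⟩ := E.mem_stageExps_of_lt hgI hgJ he hlt
    exact ⟨k, hk.trans hit, hke⟩

theorem isUpperSet_stageExps_union (hgI : ∀ a ∈ minGens (K := K) I, a ≤ g)
    (hgJ : ∀ a ∈ minGens (K := K) J, a ≤ g) (t : ℕ) :
    IsUpperSet (E.stageExps t ∪ idealExps J) := by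
  intro e f hef he
  by_cases hfJ : monomial f (1 : K) ∈ J
  · exact Or.inr hfJ
  rcases he with ⟨i, hit, hie⟩ | heJ
  · have hif : E.c i ≤ f ⊓ g := hie ▸ inf_le_inf_right g hef
    exact Or.inl (E.mem_stageExps_of_le hgI hgJ
      (E.mem_expSet_of_le (hif.trans inf_le_left) hfJ) hit hif)
  · exact absurd (isUpperSet_idealExps J hef heJ) hfJ

theorem stageExps_succ (hgI : ∀ a ∈ minGens (K := K) I, a ≤ g)
    (hgJ : ∀ a ∈ minGens (K := K) J, a ≤ g) (i : Fin E.m) :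
    E.stageExps (i + 1) = E.stageExps i ∪ {e | E.c i ≤ e ∧ monomial e (1 : K) ∉ J} := by
  ext e
  constructor
  · rintro ⟨k, hk, hke⟩
    rcases Nat.lt_succ_iff_lt_or_eq.1 hk with hk | hk
    · exact Or.inl ⟨k, hk, hke⟩
    · have he : e ∈ expSet I J := (inf_mem_charPoset_iff hgI hgJ e).1 (hke ▸ E.c_mem k)
      exact Or.inr ⟨Fin.ext hk ▸ hke ▸ inf_le_left, he.2⟩
  · rintro (⟨k, hk, hke⟩ | ⟨hle, heJ⟩)
    · exact ⟨k, Nat.lt_succ_of_lt hk, hke⟩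
    · exact E.mem_stageExps_of_le hgI hgJ (E.mem_expSet_of_le hle heJ) (Nat.lt_succ_self i)
        (le_inf hle (E.c_mem i).2)

theorem add_mem_stageExps_union_iff (hgI : ∀ a ∈ minGens (K := K) I, a ≤ g)
    (hgJ : ∀ a ∈ minGens (K := K) J, a ≤ g) (i : Fin E.m) (b : Fin n →₀ ℕ) :
    E.c i + b ∈ E.stageExps i ∪ idealExps J ↔ (E.c i + b) ⊓ g ≠ E.c i := by
  constructor
  · rintro (⟨k, hk, hkc⟩ | hJ) heq
    · exact hk.ne (congrArg Fin.val (E.injective (hkc.symm.trans heq)))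
    · have hJ' := (monomial_inf_mem_iff hgJ _).2 hJ
      exact (E.c_mem i).1.2 (heq ▸ hJ')
  · intro hne
    by_cases hJ : monomial (E.c i + b) (1 : K) ∈ J
    · exact Or.inr hJ
    · exact Or.inl (E.mem_stageExps_of_lt hgI hgJ (E.mem_expSet_of_le le_self_add hJ)
        (lt_of_le_of_ne (le_inf le_self_add (E.c_mem i).2) (Ne.symm hne)))

noncomputable def primeFiltration (hgI : ∀ a ∈ minGens (K := K) I, a ≤ g)
    (hgJ : ∀ a ∈ minGens (K := K) J, a ≤ g) : QPrimeFiltration I J where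
  m := E.m
  W t := restrictSupport K (E.stageExps t)
  a := E.c
  P i := Ideal.span ((fun j => (X j : MvPolynomial (Fin n) K)) ''
    ↑(Finset.univ.filter fun j => E.c i j ≠ g j))
  bot := by
    rw [Fin.val_zero, stageExps_zero, restrictSupport_eq_span, Set.image_empty,
      Submodule.span_empty]
  top := by
    rw [Fin.val_last, E.stageExps_m hgI hgJ, restrictSupport_eq_span]
    rfl
  graded t := ⟨_, restrictSupport_eq_span K _⟩
  stable t j p hp := by
    rw [Jspan_eq_restrictSupport, ← restrictSupport_union]
    exact (restrictSupportIdeal K _ (E.isUpperSet_stageExps_union hgI hgJ t)).mul_mem_left _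
      (restrictSupport_mono K Set.subset_union_left hp)
  amem i := (E.c_mem i).1
  gen i := by
    rw [← restrictSupport_eq_span, ← restrictSupport_union, Fin.val_succ, Fin.val_castSucc,
      E.stageExps_succ hgI hgJ]
  ann i s := by
    rw [Fin.val_castSucc, Jspan_eq_restrictSupport, ← restrictSupport_union,
      mul_monomial_one_mem_restrictSupport_iff, mem_ideal_span_X_image]
    refine forall₂_congr fun b _ => ?_
    rw [E.add_mem_stageExps_union_iff hgI hgJ, Ne, add_inf_eq_self_iff (E.c_mem i).2]
    simp
  isPrime i := ⟨_, rfl⟩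

theorem sInf_rho_le_fdepth_primeFiltration (hgI : ∀ a ∈ minGens (K := K) I, a ≤ g)
    (hgJ : ∀ a ∈ minGens (K := K) J, a ≤ g) :
    ((sInf {k | ∃ c ∈ charPoset I J g, k = rho g c} : ℕ) : WithBot ℕ∞) ≤
      (E.primeFiltration hgI hgJ).fdepth := by
  refine le_iInf fun i => ?_
  calc ((sInf {k | ∃ c ∈ charPoset I J g, k = rho g c} : ℕ) : WithBot ℕ∞)
      ≤ (rho g (E.c i) : WithBot ℕ∞) := by
        have : rho g (E.c i) ∈ {k | ∃ c ∈ charPoset I J g, k = rho g c} := ⟨_, E.c_mem i, rfl⟩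
        exact_mod_cast Nat.sInf_le this
    _ ≤ _ := card_le_ringKrullDim_quotient_span_X _ _
        (Finset.disjoint_coe.2 (Finset.disjoint_filter_filter_not _ _ _))

end CharPosetEnum

theorem sInf_rho_le_fdepthQ {I J : Ideal (MvPolynomial (Fin n) K)} {g : Fin n →₀ ℕ}
    (hgI : ∀ a ∈ minGens (K := K) I, a ≤ g) (hgJ : ∀ a ∈ minGens (K := K) J, a ≤ g) :
    ((sInf {k | ∃ c ∈ charPoset I J g, k = rho g c} : ℕ) : WithBot ℕ∞) ≤ fdepthQ I J :=
  let ⟨E⟩ := CharPosetEnum.nonempty I J g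
  (E.sInf_rho_le_fdepth_primeFiltration hgI hgJ).trans
    (le_iSup (fun F : QPrimeFiltration I J => F.fdepth) _)

theorem sum_le_rho_of_le {u c g : Fin n →₀ ℕ} (hu : ∀ j, u j ≤ 1) (huc : u ≤ c) (hcg : c ≤ g)
    (hg : ∀ j, g j ≤ 1) : (u.sum fun _ e => e) ≤ rho g c :=
  calc (u.sum fun _ e => e) ≤ ∑ _ ∈ u.support, 1 := Finset.sum_le_sum fun j _ => hu j
    _ = u.support.card := by rw [Finset.card_eq_sum_ones]
    _ ≤ rho g c := Finset.card_le_card fun j hj => by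
      have := Finsupp.mem_support_iff.1 hj
      have := huc j
      have := hcg j
      have := hg j
      simp only [Zset, Finset.mem_filter, Finset.mem_univ, true_and]
      omega

theorem sInf_sum_minGens_le_sInf_rho {I : Ideal (MvPolynomial (Fin n) K)} {g : Fin n →₀ ℕ}
    (hsf : ∀ a ∈ minGens (K := K) I, ∀ j, a j ≤ 1) (hgI : ∀ a ∈ minGens (K := K) I, a ≤ g)
    (hg : ∀ j, g j ≤ 1) :
    sInf {k | ∃ a ∈ minGens (K := K) I, k = a.sum fun _ e => e} ≤
      sInf {k | ∃ c ∈ charPoset I ⊥ g, k = rho g c} := by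
  rcases Set.eq_empty_or_nonempty (minGens (K := K) I) with hempty | ⟨u₀, hu₀⟩
  · simp [hempty]
  obtain ⟨c, hc, hceq⟩ := Nat.sInf_mem (s := {k | ∃ c ∈ charPoset I ⊥ g, k = rho g c})
    ⟨_, u₀, ⟨⟨hu₀.1, monomial_one_notMem_bot u₀⟩, hgI u₀ hu₀⟩, rfl⟩
  obtain ⟨u, hu, huc⟩ := exists_mem_minGens_le hc.1.1
  have hu_sum : (u.sum fun _ e => e) ∈ {k | ∃ a ∈ minGens (K := K) I, k = a.sum fun _ e => e} :=
    ⟨u, hu, rfl⟩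
  rw [hceq]
  exact (Nat.sInf_le hu_sum).trans (sum_le_rho_of_le (hsf u hu) huc hc.2 hg)

theorem sInf_sum_minGens_le_fdepthQ_bot {I : Ideal (MvPolynomial (Fin n) K)}
    (hsf : ∀ a ∈ minGens (K := K) I, ∀ j, a j ≤ 1) :
    ((sInf {k | ∃ a ∈ minGens (K := K) I, k = a.sum fun _ e => e} : ℕ) : WithBot ℕ∞) ≤
      fdepthQ I ⊥ := by
  let one : Fin n →₀ ℕ := Finsupp.equivFunOnFinite.symm 1
  have hgI : ∀ a ∈ minGens (K := K) I, a ≤ one := fun a ha j => hsf a ha j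
  have hgJ : ∀ a ∈ minGens (K := K) (⊥ : Ideal (MvPolynomial (Fin n) K)), a ≤ one :=
    fun a ha => absurd ha.1 (monomial_one_notMem_bot a)
  refine le_trans ?_ (sInf_rho_le_fdepthQ hgI hgJ)
  exact_mod_cast sInf_sum_minGens_le_sInf_rho hsf hgI fun _ => le_rfl

theorem fdepth_ge_min_rho_general
    {n : ℕ} {K : Type} [Field K] (I J : Ideal (MvPolynomial (Fin n) K))
    (g : Fin n →₀ ℕ)
    (hg : ∀ j : Fin n,
      IsGreatest {k | ∃ a ∈ minGens (K := K) I ∪ minGens (K := K) J, k = a j} (g j)) :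
    ((sInf {k | ∃ c ∈ charPoset I J g, k = rho g c} : ℕ) : WithBot ℕ∞) ≤ fdepthQ I J ∧
    ∀ I' : Ideal (MvPolynomial (Fin n) K), IsMonomialIdeal I' → I' ≠ ⊥ →
      (∀ a ∈ minGens (K := K) I', ∀ j, a j ≤ 1) →
      ((sInf {k | ∃ a ∈ minGens (K := K) I', k = a.sum fun _ e => e} : ℕ) : WithBot ℕ∞) ≤
        fdepthQ I' (⊥ : Ideal (MvPolynomial (Fin n) K)) :=
  ⟨sInf_rho_le_fdepthQ (fun a ha j => (hg j).2 ⟨a, Or.inl ha, rfl⟩)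
      (fun a ha j => (hg j).2 ⟨a, Or.inr ha, rfl⟩),
    fun _ _ _ hsf => sInf_sum_minGens_le_fdepthQ_bot hsf⟩

/-- **Proposition.** `fdepth I/J ≥ min {ρ(c) : c ∈ P_{I/J}}`, where `P_{I/J}` is the
characteristic poset taken with respect to `g` the join of the exponent vectors of the
minimal generators of `I` and `J`. In particular, for a squarefree monomial ideal `I`,
`fdepth I ≥ min {deg u : u ∈ G(I)}`. -/
theorem fdepth_ge_min_rho
    {n : ℕ} {K : Type} [Field K] (I J : Ideal (MvPolynomial (Fin n) K))
    (hI : IsMonomialIdeal I) (hJ : IsMonomialIdeal J) (hJI : J < I)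
    (g : Fin n →₀ ℕ)
    (hg : ∀ j : Fin n,
      IsGreatest {k | ∃ a ∈ minGens (K := K) I ∪ minGens (K := K) J, k = a j} (g j)) :
    ((sInf {k | ∃ c ∈ charPoset I J g, k = rho g c} : ℕ) : WithBot ℕ∞) ≤ fdepthQ I J ∧
    ∀ I' : Ideal (MvPolynomial (Fin n) K), IsMonomialIdeal I' → I' ≠ ⊥ →
      (∀ a ∈ minGens (K := K) I', ∀ j, a j ≤ 1) →
      ((sInf {k | ∃ a ∈ minGens (K := K) I', k = a.sum fun _ e => e} : ℕ) : WithBot ℕ∞) ≤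
        fdepthQ I' (⊥ : Ideal (MvPolynomial (Fin n) K)) :=
  fdepth_ge_min_rho_general I J g hg

end StanleyPaper
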